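/- Let Z be a centered Gaussian random variable on a real separable Hilbert space K with covariance operator S. Then E(||Z||^4) = (E(||Z||^2))^2 + 2 ||S||_HS^2, where ||S||_HS denotes the Hilbert–Schmidt norm of S. -/

import Mathlib

/-!
Expanding `‖Z‖² = ∑ᵢ ⟪Z, bᵢ⟫²` (Parseval) and integrating term by term (monotone convergence)
reduces `E‖Z‖⁴` to the mixed moments `E ⟪Z, u⟫² ⟪Z, v⟫²`. Every real combination `W` of
`X = ⟪Z, u⟫` and `Y = ⟪Z, v⟫` is a centred Gaussian, so `E W⁴ = 3 (E W²)²`; taking `W = X ± Y`,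
`X`, `Y` yields Isserlis' identity `E X²Y² = E X² · E Y² + 2 (E XY)²`, that is
`⟪Su, u⟫⟪Sv, v⟫ + 2 ⟪Su, v⟫²`. Summing over the basis, the first term contributes `(E‖Z‖²)²`
and the second `2 ∑ᵢ ‖S bᵢ‖²`, by Parseval once more.
-/

open MeasureTheory ProbabilityTheory Real Set
open scoped RealInnerProductSpace NNReal ENNReal Nat

theorem integral_pow_two_mul_mul_exp_neg_mul_sq (k : ℕ) {b : ℝ} (hb : 0 < b) :
    ∫ x : ℝ, x ^ (2 * k) * exp (-b * x ^ 2) = b ^ (-(2 * k + 1) / 2 : ℝ) * Gamma (k + 1 / 2) := by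
  have hIoi : ∫ x in Ioi (0 : ℝ), x ^ (2 * k) * exp (-b * x ^ 2)
      = b ^ (-(2 * k + 1) / 2 : ℝ) * (1 / 2) * Gamma (k + 1 / 2) := by
    have h := integral_rpow_mul_exp_neg_mul_rpow (p := 2) (q := 2 * k) two_pos
      (by linarith [(by positivity : (0 : ℝ) ≤ 2 * k)]) hb
    rw [show ((2 * k : ℝ) + 1) / 2 = k + 1 / 2 by ring] at h
    rw [← h]
    refine setIntegral_congr_fun measurableSet_Ioi fun x _ => ?_
    norm_cast
  calc ∫ x : ℝ, x ^ (2 * k) * exp (-b * x ^ 2)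
      = ∫ x : ℝ, |x| ^ (2 * k) * exp (-b * |x| ^ 2) := by
        simp only [sq_abs, (even_two_mul k).pow_abs]
    _ = _ := by
        rw [integral_comp_abs (f := fun x => x ^ (2 * k) * exp (-b * x ^ 2)), hIoi]; ring

theorem integral_pow_two_mul_gaussianReal (k : ℕ) (v : ℝ≥0) :
    ∫ x, x ^ (2 * k) ∂gaussianReal 0 v = (2 * k - 1)‼ * (v : ℝ) ^ k := by
  rcases eq_or_ne v 0 with rfl | hv
  · cases k <;> simp
  have hv0 : (0 : ℝ) < v := by positivity
  have h2v : ((2 * v : ℝ)⁻¹) ^ (-(2 * k + 1) / 2 : ℝ) = (2 * v) ^ k * √(2 * v) := by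
    rw [inv_rpow (by positivity), ← rpow_neg (by positivity), sqrt_eq_rpow, ← rpow_natCast,
      ← rpow_add (by positivity)]
    ring_nf
  calc ∫ x, x ^ (2 * k) ∂gaussianReal 0 v
      = (√(2 * π * v))⁻¹ * ∫ x : ℝ, x ^ (2 * k) * exp (-(2 * v : ℝ)⁻¹ * x ^ 2) := by
        rw [integral_gaussianReal_eq_integral_smul hv, ← integral_const_mul]
        congr 1 with x
        simp only [gaussianPDFReal, smul_eq_mul, sub_zero]
        ring_nf
    _ = (2 * k - 1)‼ * (v : ℝ) ^ k := by
        rw [integral_pow_two_mul_mul_exp_neg_mul_sq k (by positivity), h2v, Gamma_nat_add_half,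
          show 2 * π * v = π * (2 * v) by ring, sqrt_mul pi_pos.le]
        field_simp
        ring

theorem integral_pow_two_mul_of_map_eq_gaussianReal {Ω : Type*} [MeasurableSpace Ω]
    {μ : Measure Ω} {X : Ω → ℝ} {v : ℝ≥0} (hX : AEMeasurable X μ)
    (h : μ.map X = gaussianReal 0 v) (k : ℕ) :
    ∫ ω, X ω ^ (2 * k) ∂μ = (2 * k - 1)‼ * (v : ℝ) ^ k := by
  rw [← integral_pow_two_mul_gaussianReal, ← h, integral_map hX (by fun_prop)]

theorem Orthonormal.countable {𝕜 E ι : Type*} [RCLike 𝕜] [NormedAddCommGroup E]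
    [InnerProductSpace 𝕜 E] [TopologicalSpace.SeparableSpace E] {v : ι → E}
    (hv : Orthonormal 𝕜 v) : Countable ι := by
  refine Pairwise.countable_of_isOpen_disjoint (s := fun i => Metric.ball (v i) (1 / 2))
    (fun i j hij => Metric.ball_disjoint_ball ?_) (fun _ => Metric.isOpen_ball)
    (fun i => ⟨v i, Metric.mem_ball_self (by norm_num)⟩)
  have h : ‖v i - v j‖ ^ 2 = 2 := by
    rw [@norm_sub_sq 𝕜, hv.1 i, hv.1 j, hv.2 hij]; norm_num
  rw [dist_eq_norm]
  nlinarith [norm_nonneg (v i - v j)]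

theorem HilbertBasis.hasSum_inner_sq {ι K : Type*} [NormedAddCommGroup K] [InnerProductSpace ℝ K]
    (b : HilbertBasis ι ℝ K) (x : K) : HasSum (fun i => ⟪x, b i⟫ ^ 2) (‖x‖ ^ 2) := by
  simpa [sq, real_inner_comm x] using b.hasSum_inner_mul_inner x x

section
variable {Ω : Type*} [MeasurableSpace Ω] {μ : Measure Ω}

theorem hasSum_integral_of_nonneg_of_hasSum {ι : Type*} [Countable ι] {f : ι → Ω → ℝ}
    {F : Ω → ℝ} (hf : ∀ i, AEMeasurable (f i) μ) (hf_nonneg : ∀ i, 0 ≤ᵐ[μ] f i)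
    (hF : Integrable F μ) (hsum : ∀ᵐ ω ∂μ, HasSum (fun i => f i ω) (F ω)) :
    HasSum (fun i => ∫ ω, f i ω ∂μ) (∫ ω, F ω ∂μ) := by
  have hf_nonneg' : ∀ᵐ ω ∂μ, ∀ i, 0 ≤ f i ω := ae_all_iff.2 hf_nonneg
  have hlintegral : ∑' i, ∫⁻ ω, ENNReal.ofReal (f i ω) ∂μ = ∫⁻ ω, ENNReal.ofReal (F ω) ∂μ := by
    rw [← lintegral_tsum fun i => (hf i).ennreal_ofReal]
    refine lintegral_congr_ae ?_
    filter_upwards [hsum, hf_nonneg'] with ω hω h0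
    rw [← ENNReal.ofReal_tsum_of_nonneg h0 hω.summable, hω.tsum_eq]
  have hF_nonneg : 0 ≤ᵐ[μ] F := by
    filter_upwards [hsum, hf_nonneg'] with ω hω h0 using hω.nonneg h0
  have hfin : ∑' i, ∫⁻ ω, ENNReal.ofReal (f i ω) ∂μ ≠ ∞ :=
    hlintegral ▸ hF.lintegral_lt_top.ne
  rw [integral_eq_lintegral_of_nonneg_ae hF_nonneg hF.1, ← hlintegral,
    ENNReal.tsum_toReal_eq fun i => ne_top_of_le_ne_top hfin (ENNReal.le_tsum i)]
  convert ENNReal.hasSum_toReal hfin with i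
  exact integral_eq_lintegral_of_nonneg_ae (hf_nonneg i) (hf i).aestronglyMeasurable

theorem integral_sq_mul_sq_of_integral_pow_four [IsFiniteMeasure μ] {X Y : Ω → ℝ}
    (hX : MemLp X 4 μ) (hY : MemLp Y 4 μ)
    (hmom : ∀ a b : ℝ, ∫ ω, (a * X ω + b * Y ω) ^ 4 ∂μ
      = 3 * (∫ ω, (a * X ω + b * Y ω) ^ 2 ∂μ) ^ 2) :
    ∫ ω, X ω ^ 2 * Y ω ^ 2 ∂μ
      = (∫ ω, X ω ^ 2 ∂μ) * (∫ ω, Y ω ^ 2 ∂μ) + 2 * (∫ ω, X ω * Y ω ∂μ) ^ 2 := by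
  have hpow4 (a b : ℝ) : Integrable (fun ω => (a * X ω + b * Y ω) ^ 4) μ := by
    simpa [(by decide : Even 4).pow_abs] using
      ((hX.const_mul a).add (hY.const_mul b)).integrable_norm_pow (p := 4) (by norm_num)
  have h11 := hpow4 1 1
  have h1m := hpow4 1 (-1)
  have h10 := hpow4 1 0
  have h01 := hpow4 0 1
  have hX2 : MemLp X 2 μ := hX.mono_exponent (by norm_num)
  have hY2 : MemLp Y 2 μ := hY.mono_exponent (by norm_num)
  have hXsq := hX2.integrable_sq
  have hYsq := hY2.integrable_sq
  have hXY : Integrable (fun ω => X ω * Y ω) μ := hX2.integrable_mul hY2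
  have hfourth : 12 * ∫ ω, X ω ^ 2 * Y ω ^ 2 ∂μ = ∫ ω, (1 * X ω + 1 * Y ω) ^ 4 ∂μ
      + ∫ ω, (1 * X ω + -1 * Y ω) ^ 4 ∂μ - 2 * ∫ ω, (1 * X ω + 0 * Y ω) ^ 4 ∂μ
      - 2 * ∫ ω, (0 * X ω + 1 * Y ω) ^ 4 ∂μ := by
    rw [← integral_const_mul, ← integral_const_mul, ← integral_const_mul, ← integral_add,
      ← integral_sub, ← integral_sub]
    · congr 1 with ω
      ring
    all_goals fun_prop
  have hsecond (a b : ℝ) : ∫ ω, (a * X ω + b * Y ω) ^ 2 ∂μ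
      = a ^ 2 * ∫ ω, X ω ^ 2 ∂μ + 2 * a * b * ∫ ω, X ω * Y ω ∂μ + b ^ 2 * ∫ ω, Y ω ^ 2 ∂μ := by
    rw [← integral_const_mul, ← integral_const_mul, ← integral_const_mul, ← integral_add,
      ← integral_add]
    · congr 1 with ω
      ring
    all_goals fun_prop
  rw [hmom, hmom, hmom, hmom, hsecond, hsecond, hsecond, hsecond] at hfourth
  linear_combination hfourth / 12

end

section
variable {Ω : Type*} [MeasurableSpace Ω] {μ : Measure Ω} {K : Type*} [NormedAddCommGroup K]
  [InnerProductSpace ℝ K] {ι : Type*} [Countable ι] {Z : Ω → K}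

theorem HilbertBasis.hasSum_integral_mul_inner_sq (b : HilbertBasis ι ℝ K)
    (hZ : AEStronglyMeasurable Z μ) {g : Ω → ℝ} (hg : AEMeasurable g μ) (hg_nonneg : 0 ≤ g)
    (hint : Integrable (fun ω => g ω * ‖Z ω‖ ^ 2) μ) :
    HasSum (fun i => ∫ ω, g ω * ⟪Z ω, b i⟫ ^ 2 ∂μ) (∫ ω, g ω * ‖Z ω‖ ^ 2 ∂μ) :=
  hasSum_integral_of_nonneg_of_hasSum
    (fun _ => hg.mul ((hZ.inner aestronglyMeasurable_const).aemeasurable.pow_const 2))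
    (fun _ => ae_of_all _ fun ω => mul_nonneg (hg_nonneg ω) (sq_nonneg _)) hint
    (ae_of_all _ fun ω => (b.hasSum_inner_sq (Z ω)).mul_left (g ω))

theorem MeasureTheory.MemLp.integrable_inner_sq_mul_norm_sq (hZ : MemLp Z 4 μ) (u : K) :
    Integrable (fun ω => ⟪Z ω, u⟫ ^ 2 * ‖Z ω‖ ^ 2) μ := by
  have hZm := hZ.1
  refine ((hZ.integrable_norm_pow (p := 4) (by norm_num)).const_mul (‖u‖ ^ 2)).mono' (by fun_prop)
    (ae_of_all _ fun ω => ?_)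
  have h := abs_le.1 (abs_real_inner_le_norm (Z ω) u)
  rw [Real.norm_of_nonneg (by positivity)]
  calc ⟪Z ω, u⟫ ^ 2 * ‖Z ω‖ ^ 2 ≤ (‖Z ω‖ * ‖u‖) ^ 2 * ‖Z ω‖ ^ 2 := by
        gcongr ?_ * _; exact sq_le_sq' h.1 h.2
    _ = ‖u‖ ^ 2 * ‖Z ω‖ ^ 4 := by ring

variable [IsFiniteMeasure μ] {S : K →L[ℝ] K}

theorem integral_inner_sq_mul_inner_sq (hZ : MemLp Z 4 μ)
    (hcov : ∀ u v, ∫ ω, ⟪Z ω, u⟫ * ⟪Z ω, v⟫ ∂μ = ⟪S u, v⟫)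
    (hmom : ∀ u, ∫ ω, ⟪Z ω, u⟫ ^ 4 ∂μ = 3 * ⟪S u, u⟫ ^ 2) (u v : K) :
    ∫ ω, ⟪Z ω, u⟫ ^ 2 * ⟪Z ω, v⟫ ^ 2 ∂μ = ⟪S u, u⟫ * ⟪S v, v⟫ + 2 * ⟪S u, v⟫ ^ 2 := by
  have hsq (w : K) : ∫ ω, ⟪Z ω, w⟫ ^ 2 ∂μ = ⟪S w, w⟫ := by simpa [sq] using hcov w w
  have hlin (a c : ℝ) (ω : Ω) : a * ⟪Z ω, u⟫ + c * ⟪Z ω, v⟫ = ⟪Z ω, a • u + c • v⟫ := by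
    simp [inner_add_right, inner_smul_right]
  rw [integral_sq_mul_sq_of_integral_pow_four (hZ.inner_const u) (hZ.inner_const v), hsq, hsq,
    hcov]
  intro a c
  simp_rw [hlin, hmom, hsq]

theorem HilbertBasis.hasSum_two_mul_norm_apply_sq (b : HilbertBasis ι ℝ K) (hZ : MemLp Z 4 μ)
    (hcov : ∀ u v, ∫ ω, ⟪Z ω, u⟫ * ⟪Z ω, v⟫ ∂μ = ⟪S u, v⟫)
    (hmom : ∀ u, ∫ ω, ⟪Z ω, u⟫ ^ 4 ∂μ = 3 * ⟪S u, u⟫ ^ 2) :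
    HasSum (fun i => 2 * ‖S (b i)‖ ^ 2) (∫ ω, ‖Z ω‖ ^ 4 ∂μ - (∫ ω, ‖Z ω‖ ^ 2 ∂μ) ^ 2) := by
  have hZm := hZ.1
  have htrace : HasSum (fun i => ⟪S (b i), b i⟫) (∫ ω, ‖Z ω‖ ^ 2 ∂μ) := by
    have h := b.hasSum_integral_mul_inner_sq hZm aemeasurable_const (g := 1) zero_le_one
      (by simpa using (hZ.mono_exponent (p := 2) (by norm_num)).integrable_norm_pow')
    simpa [sq, hcov] using h
  have hrow (u : K) : ∫ ω, ⟪Z ω, u⟫ ^ 2 * ‖Z ω‖ ^ 2 ∂μ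
      = ⟪S u, u⟫ * ∫ ω, ‖Z ω‖ ^ 2 ∂μ + 2 * ‖S u‖ ^ 2 := by
    refine (b.hasSum_integral_mul_inner_sq hZm (g := fun ω => ⟪Z ω, u⟫ ^ 2)
      ((hZm.inner aestronglyMeasurable_const).aemeasurable.pow_const 2)
      (fun ω => sq_nonneg _) (hZ.integrable_inner_sq_mul_norm_sq u)).unique ?_
    simp_rw [integral_inner_sq_mul_inner_sq hZ hcov hmom]
    exact (htrace.mul_left _).add ((b.hasSum_inner_sq (S u)).mul_left 2)
  have hnorm4 := b.hasSum_integral_mul_inner_sq hZm (g := fun ω => ‖Z ω‖ ^ 2)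
    (hZm.norm.aemeasurable.pow_const 2) (fun ω => sq_nonneg _)
    (by simpa [← pow_add] using hZ.integrable_norm_pow (p := 4) (by norm_num))
  have h4 : ∫ ω, ‖Z ω‖ ^ 2 * ‖Z ω‖ ^ 2 ∂μ = ∫ ω, ‖Z ω‖ ^ 4 ∂μ := by
    congr 1 with ω; ring
  simp_rw [mul_comm (‖Z _‖ ^ 2), hrow, h4] at hnorm4
  have h := hnorm4.sub (htrace.mul_right (∫ ω, ‖Z ω‖ ^ 2 ∂μ))
  simp only [add_sub_cancel_left, ← sq] at h
  exact h

end

theorem gaussian_fourth_moment_general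
    {Ω : Type*} [MeasurableSpace Ω] (μ : Measure Ω) [IsProbabilityMeasure μ]
    {K : Type*} [NormedAddCommGroup K] [InnerProductSpace ℝ K]
    [TopologicalSpace.SeparableSpace K]
    {ι : Type*} (b : HilbertBasis ι ℝ K)
    (Z : Ω → K) (S : K →L[ℝ] K)
    (hgauss : ∀ u : K,
      Measure.map (fun ω => ⟪Z ω, u⟫) μ = gaussianReal 0 (Real.toNNReal ⟪S u, u⟫))
    (hcov : ∀ u v : K, ∫ ω, ⟪Z ω, u⟫ * ⟪Z ω, v⟫ ∂μ = ⟪S u, v⟫)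
    (hL4 : MemLp Z 4 μ) :
    ∫ ω, ‖Z ω‖ ^ 4 ∂μ = (∫ ω, ‖Z ω‖ ^ 2 ∂μ) ^ 2 + 2 * ∑' i, ‖S (b i)‖ ^ 2 := by
  have : Countable ι := b.orthonormal.countable
  have hmom (u : K) : ∫ ω, ⟪Z ω, u⟫ ^ 4 ∂μ = 3 * ⟪S u, u⟫ ^ 2 := by
    have hSu : 0 ≤ ⟪S u, u⟫ := hcov u u ▸ integral_nonneg fun ω => mul_self_nonneg _
    simpa [Real.coe_toNNReal _ hSu] using integral_pow_two_mul_of_map_eq_gaussianReal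
      (hL4.1.inner aestronglyMeasurable_const).aemeasurable (hgauss u) 2
  rw [← tsum_mul_left, (b.hasSum_two_mul_norm_apply_sq hL4 hcov hmom).tsum_eq]
  ring

/-- If `Z` is a centered Gaussian random variable on a separable Hilbert
space `K` with covariance operator `S`, then `E‖Z‖⁴ = (E‖Z‖²)² + 2‖S‖_HS²`. -/
theorem gaussian_fourth_moment
    {Ω : Type*} [MeasurableSpace Ω] (μ : Measure Ω) [IsProbabilityMeasure μ]
    {K : Type*} [NormedAddCommGroup K] [InnerProductSpace ℝ K] [CompleteSpace K]
    [TopologicalSpace.SeparableSpace K]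
    {ι : Type*} (b : HilbertBasis ι ℝ K)
    (Z : Ω → K) (S : K →L[ℝ] K)
    (hmeas : AEStronglyMeasurable Z μ)
    (hgauss : ∀ u : K,
      Measure.map (fun ω => ⟪Z ω, u⟫) μ = gaussianReal 0 (Real.toNNReal ⟪S u, u⟫))
    (hcov : ∀ u v : K, ∫ ω, ⟪Z ω, u⟫ * ⟪Z ω, v⟫ ∂μ = ⟪S u, v⟫)
    (hL4 : MemLp Z 4 μ)
    (hHS : Summable fun i => ‖S (b i)‖ ^ 2) :
    ∫ ω, ‖Z ω‖ ^ 4 ∂μ = (∫ ω, ‖Z ω‖ ^ 2 ∂μ) ^ 2 + 2 * ∑' i, ‖S (b i)‖ ^ 2 :=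
  gaussian_fourth_moment_general μ b Z S hgauss hcov hL4
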